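/- Let (X, ρ) be a compact metric space, with closed subsets A_n → A in Hausdorff distance and Radon probability measures μ_n on A_n converging weakly to μ on A. If f_n ∈ C(A_n) satisfy f_n ↣ f for some f ∈ C(A), then f ∈ L²(A; μ) and f_n converges to f strongly in L², i.e., there exist u_j ∈ C(A) with ‖u_j − f‖_{L²(A;μ)} → 0 and lim_j limsup_n ‖f_n − u_j ∘ I_n‖_{L²(A_n;μ_n)} = 0, where I_n : A_n → A are Borel maps with sup_{x} ρ(I_n(x), x) → 0. -/

import Mathlib

open Metric MeasureTheory Filter Topology

/-- Generalized locally uniform convergence `f n ↣ g` on varying sets. -/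
def ConvTo {X : Type*} [MetricSpace X] (A : ℕ → Set X) (Alim : Set X)
    (f : ℕ → X → ℝ) (g : X → ℝ) : Prop :=
  ∀ (x : ℕ → X) (x₀ : X), (∀ n, x n ∈ A n) → x₀ ∈ Alim →
    Tendsto x atTop (𝓝 x₀) → Tendsto (fun n => f n (x n)) atTop (𝓝 (g x₀))

/-! Take the approximating sequence constant, `u j = G` for a Tietze extension `G` of `flim`.
Then `f n - G ∘ ι n → 0` uniformly on `A n`: otherwise compactness yields bad points
`x k ∈ A (σ k)` converging to some `x₀`, which lies in `Alim` by Hausdorff convergence; padding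
them with points of `A n` approaching `x₀` produces a sequence along which `f n ↣ flim` and
`G ∘ ι n ↣ flim` force the difference to vanish. Uniform convergence on the supports of the
probability measures `μ n` gives convergence of the `L²` distances. -/

theorem Function.tendsto_extend_of_strictMono {α : Type*} {σ : ℕ → ℕ} (hσ : StrictMono σ)
    {y w : ℕ → α} {l : Filter α} (hy : Tendsto y atTop l) (hw : Tendsto w atTop l) :
    Tendsto (Function.extend σ y w) atTop l := by
  intro U hU
  obtain ⟨K, hK⟩ := eventually_atTop.mp (hy hU)
  obtain ⟨N, hN⟩ := eventually_atTop.mp (hw hU)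
  refine eventually_atTop.mpr ⟨max (σ K) N, fun n hn => ?_⟩
  by_cases hσn : ∃ k, σ k = n
  · obtain ⟨k, rfl⟩ := hσn
    rw [hσ.injective.extend_apply]
    exact hK k (hσ.le_iff_le.mp (le_of_max_le_left hn))
  · rw [Function.extend_apply' _ _ _ hσn]
    exact hN n (le_of_max_le_right hn)

section Hausdorff

variable {X : Type*} [MetricSpace X] {Alim : Set X}

theorem IsClosed.mem_of_tendsto_of_hausdorffDist_tendsto_zero {ι : Type*} {l : Filter ι}
    [l.NeBot] {B : ι → Set X} {x : ι → X} {x₀ : X} (hAlim : IsClosed Alim)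
    (hfin : ∀ i, hausdorffEDist (B i) Alim ≠ ⊤)
    (htend : Tendsto (fun i => hausdorffDist (B i) Alim) l (𝓝 0))
    (hxB : ∀ i, x i ∈ B i) (hx : Tendsto x l (𝓝 x₀)) : x₀ ∈ Alim := by
  obtain ⟨i⟩ := l.nonempty_of_neBot
  have hne : Alim.Nonempty := nonempty_of_hausdorffEDist_ne_top ⟨x i, hxB i⟩ (hfin i)
  have hinf : Tendsto (fun i => infDist (x i) Alim) l (𝓝 (infDist x₀ Alim)) :=
    ((continuous_infDist_pt Alim).tendsto x₀).comp hx
  have hle : infDist x₀ Alim ≤ 0 := le_of_tendsto_of_tendsto hinf htend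
    (Eventually.of_forall fun i => infDist_le_hausdorffDist_of_mem (hxB i) (hfin i))
  exact (hAlim.mem_iff_infDist_zero hne).mpr (le_antisymm hle infDist_nonneg)

theorem exists_tendsto_of_hausdorffDist_tendsto_zero {A : ℕ → Set X} {x₀ : X}
    (hfin : ∀ n, hausdorffEDist (A n) Alim ≠ ⊤)
    (htend : Tendsto (fun n => hausdorffDist (A n) Alim) atTop (𝓝 0)) (hx₀ : x₀ ∈ Alim) :
    ∃ w : ℕ → X, (∀ n, w n ∈ A n) ∧ Tendsto w atTop (𝓝 x₀) := by
  have hr : ∀ n : ℕ, hausdorffDist (A n) Alim < hausdorffDist (A n) Alim + 1 / (n + 1) :=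
    fun n => lt_add_of_pos_right _ Nat.one_div_pos_of_nat
  choose w hwA hwd using fun n => exists_dist_lt_of_hausdorffDist_lt' hx₀ (hr n) (hfin n)
  refine ⟨w, hwA, tendsto_iff_dist_tendsto_zero.mpr ?_⟩
  have hbound : Tendsto (fun n : ℕ => hausdorffDist (A n) Alim + 1 / (n + 1)) atTop (𝓝 0) := by
    simpa using htend.add tendsto_one_div_add_atTop_nhds_zero_nat
  exact squeeze_zero (fun _ => dist_nonneg) (fun n => (hwd n).le) hbound

end Hausdorff

namespace ConvTo

variable {X : Type*} [MetricSpace X] {A : ℕ → Set X} {Alim : Set X} {f : ℕ → X → ℝ}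
  {g : X → ℝ}

theorem tendsto_subseq (hconv : ConvTo A Alim f g) {x₀ : X} (hx₀ : x₀ ∈ Alim)
    {w : ℕ → X} (hwA : ∀ n, w n ∈ A n) (hw : Tendsto w atTop (𝓝 x₀))
    {σ : ℕ → ℕ} (hσ : StrictMono σ)
    {y : ℕ → X} (hyA : ∀ k, y k ∈ A (σ k)) (hy : Tendsto y atTop (𝓝 x₀)) :
    Tendsto (fun k => f (σ k) (y k)) atTop (𝓝 (g x₀)) := by
  set z := Function.extend σ y w
  have hzA : ∀ n, z n ∈ A n := by
    intro n
    by_cases hσn : ∃ k, σ k = n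
    · obtain ⟨k, rfl⟩ := hσn
      simpa [z, hσ.injective.extend_apply] using hyA k
    · simpa [z, Function.extend_apply' _ _ _ hσn] using hwA n
  have hz := hconv z x₀ hzA hx₀ (Function.tendsto_extend_of_strictMono hσ hy hw)
  simpa [Function.comp_def, z, hσ.injective.extend_apply] using hz.comp hσ.tendsto_atTop

theorem eventually_abs_sub_lt [CompactSpace X] (hAlim : IsClosed Alim)
    (hfin : ∀ n, hausdorffEDist (A n) Alim ≠ ⊤)
    (htend : Tendsto (fun n => hausdorffDist (A n) Alim) atTop (𝓝 0))
    {f' : ℕ → X → ℝ} (hf : ConvTo A Alim f g) (hf' : ConvTo A Alim f' g)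
    {ε : ℝ} (hε : 0 < ε) :
    ∀ᶠ n in atTop, ∀ x ∈ A n, |f n x - f' n x| < ε := by
  by_contra hcon
  simp only [not_eventually, not_forall, not_lt] at hcon
  obtain ⟨φ, hφ, hbad⟩ := extraction_of_frequently_atTop hcon
  choose x hxA hxbad using hbad
  obtain ⟨x₀, ψ, hψ, hx⟩ := CompactSpace.tendsto_subseq x
  have hσ : StrictMono (φ ∘ ψ) := hφ.comp hψ
  have hyA : ∀ k, (x ∘ ψ) k ∈ A ((φ ∘ ψ) k) := fun k => hxA (ψ k)
  have hx₀ : x₀ ∈ Alim := hAlim.mem_of_tendsto_of_hausdorffDist_tendsto_zero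
    (fun _ => hfin _) (htend.comp hσ.tendsto_atTop) hyA hx
  obtain ⟨w, hwA, hw⟩ := exists_tendsto_of_hausdorffDist_tendsto_zero hfin htend hx₀
  have hdiff := (hf.tendsto_subseq hx₀ hwA hw hσ hyA hx).sub
    (hf'.tendsto_subseq hx₀ hwA hw hσ hyA hx)
  rw [sub_self] at hdiff
  obtain ⟨k, hk⟩ := (hdiff.abs.eventually (gt_mem_nhds (by simpa using hε))).exists
  exact (hxbad (ψ k)).not_gt hk

end ConvTo

theorem convTo_comp_of_dist_lt {X : Type*} [MetricSpace X] {A : ℕ → Set X} {Alim : Set X}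
    {ι : ℕ → X → X}
    (hιdist : ∀ ε : ℝ, 0 < ε → ∃ N : ℕ, ∀ n ≥ N, ∀ x ∈ A n, dist (ι n x) x < ε)
    {G g : X → ℝ} (hG : Continuous G) (hGg : Set.EqOn G g Alim) :
    ConvTo A Alim (fun n x => G (ι n x)) g := by
  intro x x₀ hxA hx₀ hx
  have hιx : Tendsto (fun n => ι n (x n)) atTop (𝓝 x₀) := by
    refine tendsto_of_tendsto_of_dist hx (tendsto_atTop.mpr fun ε hε => ?_)
    obtain ⟨N, hN⟩ := hιdist ε hε
    exact ⟨N, fun n hn => by simpa [dist_comm (x n)] using hN n hn (x n) (hxA n)⟩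
  rw [← hGg hx₀]
  exact (hG.tendsto x₀).comp hιx

theorem tendsto_integral_sq_of_eventually_abs_lt {X : Type*} [MeasurableSpace X]
    {A : ℕ → Set X} {μ : ℕ → Measure X} [∀ n, IsProbabilityMeasure (μ n)]
    (hsupp : ∀ n, μ n (A n)ᶜ = 0) {h : ℕ → X → ℝ}
    (hunif : ∀ ε : ℝ, 0 < ε → ∀ᶠ n in atTop, ∀ x ∈ A n, |h n x| < ε) :
    Tendsto (fun n => ∫ x, h n x ^ 2 ∂μ n) atTop (𝓝 0) := by
  refine tendsto_order.mpr ⟨fun a ha => Eventually.of_forall fun n =>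
    ha.trans_le (integral_nonneg fun x => sq_nonneg _), fun a ha => ?_⟩
  filter_upwards [hunif √(a / 2) (by positivity)] with n hn
  have hbound : ∀ᵐ x ∂μ n, ‖h n x ^ 2‖ ≤ a / 2 := by
    filter_upwards [ae_iff.mpr (hsupp n)] with x hx
    rw [Real.norm_of_nonneg (sq_nonneg _), ← sq_abs]
    exact ((Real.lt_sqrt (abs_nonneg _)).mp (hn x hx)).le
  calc ∫ x, h n x ^ 2 ∂μ n ≤ ‖∫ x, h n x ^ 2 ∂μ n‖ := Real.le_norm_self _
    _ ≤ a / 2 * (μ n).real Set.univ := norm_integral_le_of_norm_le_const hbound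
    _ < a := by simpa using half_lt_self ha

theorem convTo_implies_strongL2_general
    {X : Type*} [MetricSpace X] [CompactSpace X]
    [MeasurableSpace X] [BorelSpace X]
    (A : ℕ → Set X) (Alim : Set X)
    (hAlim : IsClosed Alim)
    (hfin : ∀ n, EMetric.hausdorffEdist (A n) Alim ≠ ⊤)
    (htend : Tendsto (fun n => Metric.hausdorffDist (A n) Alim) atTop (𝓝 0))
    (μ : ℕ → Measure X) (μlim : Measure X)
    [∀ n, IsProbabilityMeasure (μ n)] [IsProbabilityMeasure μlim]
    (hsupp : ∀ n, μ n ((A n)ᶜ) = 0) (hsuppl : μlim (Alimᶜ) = 0)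
    (ι : ℕ → X → X)
    (hιdist : ∀ ε : ℝ, 0 < ε → ∃ N : ℕ, ∀ n ≥ N, ∀ x ∈ A n, dist (ι n x) x < ε)
    (f : ℕ → X → ℝ)
    (flim : X → ℝ) (hflim : ContinuousOn flim Alim)
    (hconv : ConvTo A Alim f flim) :
    MemLp flim 2 μlim ∧
    ∃ u : ℕ → X → ℝ, (∀ j, ContinuousOn (u j) Alim) ∧
      Tendsto (fun j => ∫ x, (u j x - flim x) ^ 2 ∂μlim) atTop (𝓝 0) ∧
      Tendsto (fun j =>
          limsup (fun n => ∫ x, (f n x - u j (ι n x)) ^ 2 ∂(μ n)) atTop)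
        atTop (𝓝 0) := by
  obtain ⟨G, hG⟩ := ContinuousMap.exists_restrict_eq hAlim ⟨_, hflim.domRestrict⟩
  have hGflim : Set.EqOn G flim Alim := fun x hx => DFunLike.congr_fun hG ⟨x, hx⟩
  have hGae : G =ᵐ[μlim] flim := (ae_iff.mpr hsuppl).mono hGflim
  have hGι : ConvTo A Alim (fun n x => G (ι n x)) flim :=
    convTo_comp_of_dist_lt hιdist G.continuous hGflim
  have hunif (ε : ℝ) (hε : 0 < ε) : ∀ᶠ n in atTop, ∀ x ∈ A n, |f n x - G (ι n x)| < ε :=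
    hconv.eventually_abs_sub_lt hAlim hfin htend hGι hε
  have hGdist : ∫ x, (G x - flim x) ^ 2 ∂μlim = 0 :=
    integral_eq_zero_of_ae (hGae.mono fun x hx => by simp [hx])
  refine ⟨(G.continuous.memLp_of_hasCompactSupport (.of_compactSpace _)).ae_eq hGae,
    fun _ => G, fun _ => G.continuous.continuousOn, ?_, ?_⟩
  · simp [hGdist]
  · simp [(tendsto_integral_sq_of_eventually_abs_lt hsupp hunif).limsup_eq]

/-- On a compact metric space, if `μ n ⇒ μ` weakly (probability
measures supported on `A n` resp. `A`) and `f n ∈ C(A n)` satisfy `f n ↣ f`, then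
`f ∈ L²(A; μ)` and `f n → f` strongly in `L²` in the Kuwae–Shioya sense. -/
theorem convTo_implies_strongL2
    {X : Type*} [MetricSpace X] [CompactSpace X]
    [MeasurableSpace X] [BorelSpace X]
    (A : ℕ → Set X) (Alim : Set X)
    (hA : ∀ n, IsClosed (A n)) (hAlim : IsClosed Alim)
    (hfin : ∀ n, EMetric.hausdorffEdist (A n) Alim ≠ ⊤)
    (htend : Tendsto (fun n => Metric.hausdorffDist (A n) Alim) atTop (𝓝 0))
    (μ : ℕ → Measure X) (μlim : Measure X)
    [∀ n, IsProbabilityMeasure (μ n)] [IsProbabilityMeasure μlim]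
    (hsupp : ∀ n, μ n ((A n)ᶜ) = 0) (hsuppl : μlim (Alimᶜ) = 0)
    (hweak : ∀ g : X → ℝ, Continuous g →
      Tendsto (fun n => ∫ x, g x ∂(μ n)) atTop (𝓝 (∫ x, g x ∂μlim)))
    (ι : ℕ → X → X)
    (hιmaps : ∀ n, Set.MapsTo (ι n) (A n) Alim)
    (hιmeas : ∀ n, Measurable ((A n).restrict (ι n)))
    (hιdist : ∀ ε : ℝ, 0 < ε → ∃ N : ℕ, ∀ n ≥ N, ∀ x ∈ A n, dist (ι n x) x < ε)
    (f : ℕ → X → ℝ) (hf : ∀ n, ContinuousOn (f n) (A n))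
    (flim : X → ℝ) (hflim : ContinuousOn flim Alim)
    (hconv : ConvTo A Alim f flim) :
    MemLp flim 2 μlim ∧
    ∃ u : ℕ → X → ℝ, (∀ j, ContinuousOn (u j) Alim) ∧
      Tendsto (fun j => ∫ x, (u j x - flim x) ^ 2 ∂μlim) atTop (𝓝 0) ∧
      Tendsto (fun j =>
          limsup (fun n => ∫ x, (f n x - u j (ι n x)) ^ 2 ∂(μ n)) atTop)
        atTop (𝓝 0) :=
  convTo_implies_strongL2_general A Alim hAlim hfin htend μ μlim hsupp hsuppl ι hιdist f flim hflim
    hconv
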